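/- For an invertible Hermitian matrix H*H (H an M×K complex matrix with linearly independent columns), the i-th diagonal entry of (H*H)^{-1} equals (h_i* h_i − h_i* H̄_i (H̄_i* H̄_i)^{-1} H̄_i* h_i)^{-1}, where h_i is the i-th column of H and H̄_i is H with its i-th column removed. -/

import Mathlib

/-!
By Cramer's rule `(G⁻¹)ᵢᵢ = det Ḡ / det G`, where `Ḡ` is `G` with row and column `i` deleted, and
the block determinant formula gives `det G = det Ḡ * s` with `s` the Schur complement of `Ḡ` in `G`.
For the Gram matrix `G = Hᴴ H` one has `Ḡ = H̄ᴴ H̄`, and `s` is the stated expression.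
-/

open Matrix

namespace Matrix

variable {K : Type*} [Field K] {n : ℕ}

noncomputable def schurComplAt (G : Matrix (Fin (n + 1)) (Fin (n + 1)) K) (i : Fin (n + 1)) : K :=
  G i i - (fun j => G i (i.succAbove j)) ⬝ᵥ
    (G.submatrix i.succAbove i.succAbove)⁻¹ *ᵥ fun j => G (i.succAbove j) i

theorem det_eq_det_submatrix_succAbove_mul_schurComplAt (G : Matrix (Fin (n + 1)) (Fin (n + 1)) K)
    (i : Fin (n + 1)) (hA : IsUnit (G.submatrix i.succAbove i.succAbove).det) :
    G.det = (G.submatrix i.succAbove i.succAbove).det * G.schurComplAt i := by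
  let e : Fin n ⊕ Unit ≃ Fin (n + 1) :=
    (Equiv.optionEquivSumPUnit (Fin n)).symm.trans (finSuccEquiv' i).symm
  have hblocks : G.submatrix e e = fromBlocks (G.submatrix i.succAbove i.succAbove)
      (replicateCol Unit fun j => G (i.succAbove j) i)
      (replicateRow Unit fun j => G i (i.succAbove j)) (of fun _ _ => G i i) := by
    ext (_ | _) (_ | _) <;> simp [e]
  let := (G.submatrix i.succAbove i.succAbove).invertibleOfIsUnitDet hA
  rw [← det_submatrix_equiv_self e, hblocks, det_fromBlocks₁₁, det_unique (n := Unit),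
    invOf_eq_nonsing_inv, Matrix.mul_assoc, ← replicateCol_mulVec]
  rfl

theorem inv_apply_self_eq_inv_schurComplAt (G : Matrix (Fin (n + 1)) (Fin (n + 1)) K)
    (i : Fin (n + 1)) (hA : IsUnit (G.submatrix i.succAbove i.succAbove).det) :
    G⁻¹ i i = (G.schurComplAt i)⁻¹ := by
  rw [inv_def, smul_apply, adjugate_fin_succ_eq_det_submatrix,
    det_eq_det_submatrix_succAbove_mul_schurComplAt G i hA, Ring.inverse_eq_inv,
    (Even.add_self (i : ℕ)).neg_one_pow, one_mul, smul_eq_mul, mul_inv, mul_right_comm,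
    inv_mul_cancel₀ hA.ne_zero, one_mul]

theorem submatrix_conjTranspose_mul_self {m l p : Type*} [Fintype m] [StarRing K]
    (H : Matrix m p K) (f : l → p) :
    (Hᴴ * H).submatrix f f = (H.submatrix id f)ᴴ * H.submatrix id f := by
  ext
  simp [mul_apply]

theorem schurComplAt_conjTranspose_mul_self {m : Type*} [Fintype m] [StarRing K]
    (H : Matrix m (Fin (n + 1)) K) (i : Fin (n + 1)) :
    (Hᴴ * H).schurComplAt i =
      star (fun k => H k i) ⬝ᵥ (fun k => H k i) - star (fun k => H k i) ⬝ᵥ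
        (H.submatrix id i.succAbove * ((H.submatrix id i.succAbove)ᴴ * H.submatrix id i.succAbove)⁻¹ *
          (H.submatrix id i.succAbove)ᴴ) *ᵥ (fun k => H k i) := by
  rw [schurComplAt, submatrix_conjTranspose_mul_self]
  set Hbar := H.submatrix id i.succAbove
  set h := fun k => H k i
  have hdiag : (Hᴴ * H) i i = star h ⬝ᵥ h := by simp [h, mul_apply, dotProduct]
  have hrow : (fun j => (Hᴴ * H) i (i.succAbove j)) = star h ᵥ* Hbar := by
    ext; simp [h, Hbar, mul_apply, vecMul, dotProduct]
  have hcol : (fun j => (Hᴴ * H) (i.succAbove j) i) = Hbarᴴ *ᵥ h := by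
    ext; simp [h, Hbar, mul_apply, mulVec, dotProduct]
  rw [hdiag, hrow, hcol, ← mulVec_mulVec, ← mulVec_mulVec]
  simp only [dotProduct_mulVec]

end Matrix

theorem diag_inv_gram_schur_general (M K : ℕ) (H : Matrix (Fin M) (Fin (K + 1)) ℂ)
    (i : Fin (K + 1))
    (Hbar : Matrix (Fin M) (Fin K) ℂ)
    (hHbar : ∀ (m : Fin M) (j : Fin K), Hbar m j = H m (i.succAbove j))
    (hGramBar : IsUnit (Hbarᴴ * Hbar).det)
    (h : Fin M → ℂ) (hh : ∀ m, h m = H m i) :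
    (Hᴴ * H)⁻¹ i i =
      (star h ⬝ᵥ h - star h ⬝ᵥ (Hbar * (Hbarᴴ * Hbar)⁻¹ * Hbarᴴ) *ᵥ h)⁻¹ := by
  obtain rfl : Hbar = H.submatrix id i.succAbove := Matrix.ext hHbar
  obtain rfl : h = fun m => H m i := funext hh
  rw [inv_apply_self_eq_inv_schurComplAt _ _ (by rwa [submatrix_conjTranspose_mul_self]),
    schurComplAt_conjTranspose_mul_self]

/-- Schur-complement formula for a diagonal entry of the inverse Gram matrix:
for `H : ℂ^{M×(K+1)}` with invertible Gram matrix `Hᴴ H` (full column rank),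
the `i`-th diagonal entry of `(Hᴴ H)⁻¹` equals
`(hᵢᴴ hᵢ − hᵢᴴ H̄ᵢ (H̄ᵢᴴ H̄ᵢ)⁻¹ H̄ᵢᴴ hᵢ)⁻¹`, where `hᵢ` is the `i`-th column of `H`
and `H̄ᵢ` is `H` with its `i`-th column removed. -/
theorem diag_inv_gram_schur (M K : ℕ) (H : Matrix (Fin M) (Fin (K + 1)) ℂ)
    (i : Fin (K + 1))
    (Hbar : Matrix (Fin M) (Fin K) ℂ)
    (hHbar : ∀ (m : Fin M) (j : Fin K), Hbar m j = H m (i.succAbove j))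
    (hGram : IsUnit (Hᴴ * H).det)
    (hGramBar : IsUnit (Hbarᴴ * Hbar).det)
    (h : Fin M → ℂ) (hh : ∀ m, h m = H m i) :
    (Hᴴ * H)⁻¹ i i =
      (star h ⬝ᵥ h - star h ⬝ᵥ (Hbar * (Hbarᴴ * Hbar)⁻¹ * Hbarᴴ) *ᵥ h)⁻¹ :=
  diag_inv_gram_schur_general M K H i Hbar hHbar hGramBar h hh
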